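/- arXiv:2507.00276 — 6 statements merged into one kernel-verified Lean document; each statement's English description precedes it below -/
import Mathlib

section
/- For all real numbers γ and β_p, the normalization constant of the correlated-disorder distribution satisfies Σ_τ Z_τ(γ) · exp(β_p·Σ_{e∈E} τ(e)) / Z_τ(β_p) = (2·cosh γ)^{N_B}, where the outer sum runs over all 2^{N_B} disorder configurations τ : E → {−1, 1}. -/
open Finset

/-- Ising energy `H_τ(S) = Σ_e τ(e)·S(i(e))·S(j(e))`, spins valued in `ℤˣ = {−1, 1}`. -/
noncomputable def isingH {V E : Type*} [Fintype E] (i j : E → V)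
    (τ : E → ℤˣ) (S : V → ℤˣ) : ℝ :=
  ∑ e, ((τ e : ℤ) : ℝ) * ((S (i e) : ℤ) : ℝ) * ((S (j e) : ℤ) : ℝ)

/-- Partition function `Z_τ(β) = Σ_S exp(β·H_τ(S))`. -/
noncomputable def isingZ {V E : Type*} [Fintype V] [DecidableEq V] [Fintype E]
    (i j : E → V) (β : ℝ) (τ : E → ℤˣ) : ℝ :=
  ∑ S : V → ℤˣ, Real.exp (β * isingH i j τ S)

lemma unit_sq (x : ℤˣ) : ((x : ℤ) : ℝ) * ((x : ℤ) : ℝ) = 1 := by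
  rcases Int.units_eq_one_or x with h | h <;> simp [h]

lemma isingZ_pos {V E : Type*} [Fintype V] [DecidableEq V] [Fintype E]
    (i j : E → V) (β : ℝ) (τ : E → ℤˣ) : 0 < isingZ i j β τ :=
  Finset.sum_pos (fun _ _ => Real.exp_pos _) ⟨fun _ => 1, Finset.mem_univ _⟩

lemma isingZ_gauge {V E : Type*} [Fintype V] [DecidableEq V] [Fintype E]
    (i j : E → V) (β : ℝ) (τ : E → ℤˣ) (S : V → ℤˣ) :
    isingZ i j β (fun e => τ e * (S (i e) * S (j e))) = isingZ i j β τ := by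
  unfold isingZ
  apply Fintype.sum_equiv (Equiv.mulRight S)
  intro T
  congr 1
  congr 1
  unfold isingH
  apply Finset.sum_congr rfl
  intro e _
  simp only [Equiv.coe_mulRight, Pi.mul_apply, Units.val_mul]
  push_cast
  ring

/-- `Σ_τ Z_τ(γ)·exp(β_p·Σ_e τ(e))/Z_τ(β_p) = (2 cosh γ)^{N_B}`. -/
theorem stmt_0 {V E : Type*} [Fintype V] [DecidableEq V] [Fintype E] [DecidableEq E]
    (i j : E → V) (hij : ∀ e, i e ≠ j e) (γ βp : ℝ) :
    ∑ τ : E → ℤˣ,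
        isingZ i j γ τ * (Real.exp (βp * ∑ e, ((τ e : ℤ) : ℝ)) / isingZ i j βp τ)
      = (2 * Real.cosh γ) ^ (Fintype.card E) := by
  have step1 : ∀ τ : E → ℤˣ,
      isingZ i j γ τ * (Real.exp (βp * ∑ e, ((τ e : ℤ) : ℝ)) / isingZ i j βp τ)
      = ∑ S : V → ℤˣ, Real.exp (γ * isingH i j τ S) *
          (Real.exp (βp * ∑ e, ((τ e : ℤ) : ℝ)) / isingZ i j βp τ) := by
    intro τ; rw [isingZ, Finset.sum_mul]
  simp_rw [step1]
  rw [Finset.sum_comm]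
  have step2 : ∀ S : V → ℤˣ,
      (∑ τ : E → ℤˣ, Real.exp (γ * isingH i j τ S) *
          (Real.exp (βp * ∑ e, ((τ e : ℤ) : ℝ)) / isingZ i j βp τ))
      = ∑ τ : E → ℤˣ, Real.exp (γ * ∑ e, ((τ e : ℤ) : ℝ)) *
          (Real.exp (βp * isingH i j τ S) / isingZ i j βp τ) := by
    intro S
    refine (Fintype.sum_equiv (Equiv.mulRight (fun e => S (i e) * S (j e))) _ _ ?_).symm
    intro τ
    have hσ : (Equiv.mulRight (fun e => S (i e) * S (j e)) τ)
        = fun e => τ e * (S (i e) * S (j e)) := rfl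
    simp only [hσ]
    have hH : isingH i j (fun e => τ e * (S (i e) * S (j e))) S
        = ∑ e, ((τ e : ℤ) : ℝ) := by
      unfold isingH
      apply Finset.sum_congr rfl
      intro e _
      simp only [Units.val_mul]
      push_cast
      have h1 := unit_sq (S (i e))
      have h2 := unit_sq (S (j e))
      linear_combination (((τ e : ℤ) : ℝ) * ((S (j e) : ℤ) : ℝ) * ((S (j e) : ℤ) : ℝ)) * h1
        + ((τ e : ℤ) : ℝ) * h2
    have hT : (∑ e, (((τ e * (S (i e) * S (j e))) : ℤˣ) : ℤ) : ℝ)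
        = isingH i j τ S := by
      unfold isingH
      apply Finset.sum_congr rfl
      intro e _
      push_cast
      ring
    rw [hH, isingZ_gauge, hT]
  simp_rw [step2]
  rw [Finset.sum_comm]
  have step3 : ∀ τ : E → ℤˣ,
      (∑ S : V → ℤˣ, Real.exp (γ * ∑ e, ((τ e : ℤ) : ℝ)) *
          (Real.exp (βp * isingH i j τ S) / isingZ i j βp τ))
      = Real.exp (γ * ∑ e, ((τ e : ℤ) : ℝ)) := by
    intro τ
    rw [← Finset.mul_sum, ← Finset.sum_div,
      show (∑ S : V → ℤˣ, Real.exp (βp * isingH i j τ S)) = isingZ i j βp τ from rfl,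
      div_self (isingZ_pos i j βp τ).ne', mul_one]
  simp_rw [step3]
  have hprod : ∀ τ : E → ℤˣ, Real.exp (γ * ∑ e, ((τ e : ℤ) : ℝ))
      = ∏ e, Real.exp (γ * ((τ e : ℤ) : ℝ)) := by
    intro τ; rw [← Real.exp_sum, Finset.mul_sum]
  simp_rw [hprod]
  rw [← Fintype.piFinset_univ, ← Finset.prod_univ_sum (fun _ : E => (Finset.univ : Finset ℤˣ))
    (fun e x => Real.exp (γ * ((x : ℤ) : ℝ)))]
  have hx : ∀ e : E, (∑ x : ℤˣ, Real.exp (γ * ((x : ℤ) : ℝ))) = 2 * Real.cosh γ := by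
    intro e
    have hu : (Finset.univ : Finset ℤˣ) = {1, -1} := by decide
    rw [hu, Finset.sum_insert (by decide), Finset.sum_singleton]
    simp [Real.cosh_eq]
    ring
  rw [Finset.prod_congr rfl (fun e _ => hx e), Finset.prod_const, Finset.card_univ]
end

section
/- Let f be a real-valued function on disorder configurations that is gauge invariant, i.e. f(τ^σ) = f(τ) for all τ and all σ : V → {−1, 1}. Then for every real γ, (1/2^N) · Σ_τ Z_τ(γ)·f(τ) = Σ_τ exp(γ·Σ_{e∈E} τ(e)) · f(τ); that is, the average of f under the gauge-invariant disorder weight Z_τ(γ)/(2^N·(2·cosh γ)^{N_B}) equals its average under the i.i.d. Edwards–Anderson disorder weight Π_{e∈E} exp(γ·τ(e))/(2·cosh γ). -/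
open Finset

/-- Gauge transform `τ^σ(e) = τ(e)·σ(i(e))·σ(j(e))`. -/
def gaugeT {V E : Type*} (i j : E → V) (σ : V → ℤˣ) (τ : E → ℤˣ) : E → ℤˣ :=
  fun e => τ e * σ (i e) * σ (j e)

/-- for gauge-invariant , the gauge-averaged weight reduces to the
i.i.d. Edwards–Anderson weight: . -/
theorem stmt_3 {V E : Type*} [Fintype V] [DecidableEq V] [Fintype E] [DecidableEq E]
    (i j : E → V) (hij : ∀ e, i e ≠ j e)
    (f : (E → ℤˣ) → ℝ)
    (hf : ∀ (τ : E → ℤˣ) (σ : V → ℤˣ), f (gaugeT i j σ τ) = f τ)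
    (γ : ℝ) :
    (1 / 2 ^ (Fintype.card V)) * ∑ τ : E → ℤˣ, isingZ i j γ τ * f τ
      = ∑ τ : E → ℤˣ, Real.exp (γ * ∑ e, ((τ e : ℤ) : ℝ)) * f τ := by

  have hinv : ∀ S : V → ℤˣ, Function.Involutive (gaugeT i j S) := by
    intro S τ
    funext e
    have h1 : S (i e) * S (i e) = 1 := Int.units_mul_self _
    have h2 : S (j e) * S (j e) = 1 := Int.units_mul_self _
    simp only [gaugeT]
    calc τ e * S (i e) * S (j e) * S (i e) * S (j e)
        = τ e * (S (i e) * S (i e)) * (S (j e) * S (j e)) := by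
          rw [mul_assoc (τ e), mul_assoc (τ e), mul_assoc (τ e), mul_assoc (τ e)]
          congr 1
          rw [← mul_assoc, mul_assoc (S (i e) * S (j e)), mul_mul_mul_comm,
            ← mul_assoc]
      _ = τ e := by rw [h1, h2, mul_one, mul_one]
  have key : ∀ S : V → ℤˣ, ∑ τ : E → ℤˣ, Real.exp (γ * isingH i j τ S) * f τ
      = ∑ τ : E → ℤˣ, Real.exp (γ * ∑ e, ((τ e : ℤ) : ℝ)) * f τ := by
    intro S
    have step1 : ∀ τ : E → ℤˣ, Real.exp (γ * isingH i j τ S) * f τ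
        = Real.exp (γ * ∑ e, ((gaugeT i j S τ e : ℤ) : ℝ)) * f (gaugeT i j S τ) := by
      intro τ
      rw [hf]
      have he : ∀ e : E, ((τ e : ℤ) : ℝ) * ((S (i e) : ℤ) : ℝ) * ((S (j e) : ℤ) : ℝ)
          = ((gaugeT i j S τ e : ℤ) : ℝ) := fun e => by
        simp only [gaugeT]
        push_cast
        ring
      unfold isingH
      rw [Finset.sum_congr rfl fun e _ => he e]
    calc ∑ τ : E → ℤˣ, Real.exp (γ * isingH i j τ S) * f τ
        = ∑ τ : E → ℤˣ, Real.exp (γ * ∑ e, ((gaugeT i j S τ e : ℤ) : ℝ)) * f (gaugeT i j S τ) :=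
          Finset.sum_congr rfl fun τ _ => step1 τ
      _ = ∑ τ : E → ℤˣ, Real.exp (γ * ∑ e, ((τ e : ℤ) : ℝ)) * f τ :=
          Fintype.sum_bijective (gaugeT i j S) (hinv S).bijective _ _ (fun τ => rfl)
  have hswap : ∑ τ : E → ℤˣ, isingZ i j γ τ * f τ
      = ∑ S : V → ℤˣ, ∑ τ : E → ℤˣ, Real.exp (γ * isingH i j τ S) * f τ := by
    rw [Finset.sum_comm]
    refine Finset.sum_congr rfl fun τ _ => ?_
    rw [isingZ, Finset.sum_mul]
  rw [hswap]
  have : ∑ S : V → ℤˣ, ∑ τ : E → ℤˣ, Real.exp (γ * isingH i j τ S) * f τ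
      = (2 : ℝ) ^ (Fintype.card V) * ∑ τ : E → ℤˣ, Real.exp (γ * ∑ e, ((τ e : ℤ) : ℝ)) * f τ := by
    rw [Finset.sum_congr rfl fun S _ => key S, Finset.sum_const, Finset.card_univ,
      nsmul_eq_mul]
    congr 1
    simp [Fintype.card_fun]
  rw [this, one_div, ← mul_assoc, inv_mul_cancel₀ (by positivity), one_mul]
end

section
/- For all real numbers β, β_p and every function g : ℝ → ℝ, the magnetization distribution of the Mattis model equals the overlap distribution of two independent pure Ising systems: Σ_{ξ,S} g((1/N)·Σ_{v∈V} S(v)) · exp(β_p·Σ_{e∈E} ξ(i(e))·ξ(j(e)) + β·Σ_{e∈E} ξ(i(e))·ξ(j(e))·S(i(e))·S(j(e))) = Σ_{ξ,S} g((1/N)·Σ_{v∈V} S(v)·ξ(v)) · exp(β_p·Σ_{e∈E} ξ(i(e))·ξ(j(e)) + β·Σ_{e∈E} S(i(e))·S(j(e))), where ξ and S independently range over all spin configurations. -/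
open Finset

/-- the magnetization distribution of the Mattis model equals the overlap
distribution of two independent pure Ising systems. -/
theorem stmt_11 {V E : Type*} [Fintype V] [DecidableEq V] [Fintype E] [DecidableEq E]
    (i j : E → V) (hij : ∀ e, i e ≠ j e)
    (β βp : ℝ) (g : ℝ → ℝ) :
    ∑ ξ : V → ℤˣ, ∑ S : V → ℤˣ,
        g ((1 / (Fintype.card V : ℝ)) * ∑ v, ((S v : ℤ) : ℝ)) *
          Real.exp (βp * ∑ e, ((ξ (i e) : ℤ) : ℝ) * ((ξ (j e) : ℤ) : ℝ) +
            β * ∑ e, ((ξ (i e) : ℤ) : ℝ) * ((ξ (j e) : ℤ) : ℝ) *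
              ((S (i e) : ℤ) : ℝ) * ((S (j e) : ℤ) : ℝ))
      = ∑ ξ : V → ℤˣ, ∑ S : V → ℤˣ,
          g ((1 / (Fintype.card V : ℝ)) * ∑ v, ((S v : ℤ) : ℝ) * ((ξ v : ℤ) : ℝ)) *
            Real.exp (βp * ∑ e, ((ξ (i e) : ℤ) : ℝ) * ((ξ (j e) : ℤ) : ℝ) +
              β * ∑ e, ((S (i e) : ℤ) : ℝ) * ((S (j e) : ℤ) : ℝ)) := by
  refine Finset.sum_congr rfl fun ξ _ => ?_
  have hbij : Function.Bijective (fun (S : V → ℤˣ) (v : V) => ξ v * S v) := by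
    have hinv : Function.Involutive (fun (S : V → ℤˣ) (v : V) => ξ v * S v) := by
      intro S
      funext v
      simp [← mul_assoc, Int.units_mul_self]
    exact hinv.bijective
  refine (Fintype.sum_bijective _ hbij _ _ fun S => ?_).symm
  have hsq : ∀ v : V, ((ξ v : ℤ) : ℝ) * ((ξ v : ℤ) : ℝ) = 1 := by
    intro v
    rw [← Int.cast_mul, ← Units.val_mul, Int.units_mul_self]; norm_num
  congr 1
  · congr 1
    congr 1
    refine Finset.sum_congr rfl fun v _ => ?_
    push_cast
    ring
  · congr 1
    have h : (∑ e, ((S (i e) : ℤ) : ℝ) * ((S (j e) : ℤ) : ℝ))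
        = ∑ e, ((ξ (i e) : ℤ) : ℝ) * ((ξ (j e) : ℤ) : ℝ) *
            (((ξ (i e) * S (i e) : ℤˣ) : ℤ) : ℝ) * (((ξ (j e) * S (j e) : ℤˣ) : ℤ) : ℝ) := by
      refine Finset.sum_congr rfl fun e _ => ?_
      push_cast
      have h1 := hsq (i e)
      have h2 := hsq (j e)
      linear_combination (-(((ξ (j e) : ℤ) : ℝ) * ((ξ (j e) : ℤ) : ℝ)) *
          ((S (i e) : ℤ) : ℝ) * ((S (j e) : ℤ) : ℝ)) * h1 -
        ((S (i e) : ℤ) : ℝ) * ((S (j e) : ℤ) : ℝ) * h2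
    rw [h]
end

section
/- Let ξ : V → {−1, 1} and let τ be the Mattis disorder configuration τ(e) = ξ(i(e))·ξ(j(e)). Then the number of spin configurations S with H_τ(S) = N_B (the ground-state degeneracy) equals 2^c, where c is the number of connected components of the graph on vertex set V whose edges are the pairs {i(e), j(e)}, e ∈ E (isolated vertices counting as components). -/
open Finset

/-- for a Mattis disorder configuration, the ground-state degeneracy is
2^c where c is the number of connected components of the underlying graph. -/
theorem stmt_13 {V E : Type*} [Fintype V] [DecidableEq V] [Fintype E] [DecidableEq E]
    (i j : E → V) (hij : ∀ e, i e ≠ j e)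
    (ξ : V → ℤˣ) (τ : E → ℤˣ) (hτ : ∀ e, τ e = ξ (i e) * ξ (j e))
    (G : SimpleGraph V)
    (hG : ∀ a b, G.Adj a b ↔ a ≠ b ∧ ∃ e, (i e = a ∧ j e = b) ∨ (i e = b ∧ j e = a)) :
    Nat.card {S : V → ℤˣ // isingH i j τ S = (Fintype.card E : ℝ)}
      = 2 ^ (Nat.card G.ConnectedComponent) := by
  classical
  set P : (V → ℤˣ) → Prop := fun S => ∀ e, ξ (i e) * S (i e) = ξ (j e) * S (j e) with hP
  -- the ground state condition is equivalent to P
  have hiff : ∀ S : (V → ℤˣ), isingH i j τ S = (Fintype.card E : ℝ) ↔ P S := by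
    intro S
    have hle : ∀ e : E, ((τ e : ℤ) : ℝ) * ((S (i e) : ℤ) : ℝ) * ((S (j e) : ℤ) : ℝ) ≤ 1 := by
      intro e
      rcases Int.units_eq_one_or (τ e) with h | h <;>
        rcases Int.units_eq_one_or (S (i e)) with h1 | h1 <;>
          rcases Int.units_eq_one_or (S (j e)) with h2 | h2 <;>
            simp [h, h1, h2]
    constructor
    · intro hS
      have : ∑ e : E, ((τ e : ℤ) : ℝ) * ((S (i e) : ℤ) : ℝ) * ((S (j e) : ℤ) : ℝ)
          = ∑ _e : E, (1 : ℝ) := by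
        simpa [isingH, Finset.sum_const, mul_comm] using hS
      have hall := (Finset.sum_eq_sum_iff_of_le (fun e _ => hle e)).mp this
      intro e
      have he := hall e (Finset.mem_univ e)
      rw [hτ e] at he
      rcases Int.units_eq_one_or (ξ (i e)) with h | h <;>
        rcases Int.units_eq_one_or (ξ (j e)) with h' | h' <;>
          rcases Int.units_eq_one_or (S (i e)) with h1 | h1 <;>
            rcases Int.units_eq_one_or (S (j e)) with h2 | h2 <;>
              simp_all <;> norm_num at he
    · intro hS
      have : ∀ e : E, ((τ e : ℤ) : ℝ) * ((S (i e) : ℤ) : ℝ) * ((S (j e) : ℤ) : ℝ) = 1 := by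
        intro e
        have he := hS e
        rw [hτ e]
        rcases Int.units_eq_one_or (ξ (i e)) with h | h <;>
          rcases Int.units_eq_one_or (ξ (j e)) with h' | h' <;>
            rcases Int.units_eq_one_or (S (i e)) with h1 | h1 <;>
              rcases Int.units_eq_one_or (S (j e)) with h2 | h2 <;>
                simp_all
      simp [isingH, this]
  -- P S implies the function ξ * S is constant along walks
  have hwalk : ∀ (S : V → ℤˣ), P S → ∀ (v w : V) (p : G.Walk v w),
      ξ v * S v = ξ w * S w := by
    intro S hS v w p
    induction p with
    | nil => rfl
    | cons h p ih =>
      rename_i a b c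
      have := (hG a b).mp h
      obtain ⟨-, e, he⟩ := this
      rcases he with ⟨h1, h2⟩ | ⟨h1, h2⟩
      · subst h1; subst h2
        rw [hS e]; exact ih
      · subst h1; subst h2
        rw [← hS e]; exact ih
  -- bijection with functions on connected components
  have hequiv : {S : V → ℤˣ // P S} ≃ (G.ConnectedComponent → ℤˣ) :=
    { toFun := fun S => SimpleGraph.ConnectedComponent.lift (fun v => ξ v * S.1 v)
        (fun v w p _ => hwalk S.1 S.2 v w p)
      invFun := fun g => ⟨fun v => ξ v * g (G.connectedComponentMk v), by
        intro e
        have hadj : G.Adj (i e) (j e) :=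
          (hG (i e) (j e)).mpr ⟨hij e, e, Or.inl ⟨rfl, rfl⟩⟩
        simp only [SimpleGraph.ConnectedComponent.connectedComponentMk_eq_of_adj hadj,
          ← mul_assoc, Int.units_mul_self, one_mul]⟩
      left_inv := by
        rintro ⟨S, hS⟩
        ext v
        simp [← mul_assoc, Int.units_mul_self]
      right_inv := by
        intro g
        funext c
        induction c using SimpleGraph.ConnectedComponent.ind with
        | _ v => simp [← mul_assoc, Int.units_mul_self] }
  have := Nat.card_congr ((Equiv.subtypeEquivRight hiff).trans hequiv)
  rw [this, Nat.card_fun]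
  congr 1
  simp [Nat.card_eq_fintype_card]
end

section
/- Fix a real number β_p and a function f on disorder configurations. Then as γ → ∞, the average of f under the correlated-disorder distribution converges to its average over Mattis (unfrustrated) configurations weighted by the pure Ising measure: lim_{γ→∞} (1/(2·cosh γ)^{N_B}) · Σ_τ Z_τ(γ) · (exp(β_p·Σ_{e∈E} τ(e)) / Z_τ(β_p)) · f(τ) = (Σ_ξ exp(β_p·Σ_{e∈E} ξ(i(e))·ξ(j(e))) · f(τ_ξ)) / (Σ_ξ exp(β_p·Σ_{e∈E} ξ(i(e))·ξ(j(e)))), where ξ ranges over all spin configurations and τ_ξ is the Mattis disorder configuration τ_ξ(e) = ξ(i(e))·ξ(j(e)). -/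
/-
Write `σ_e = τ_e S_{i(e)} S_{j(e)} ∈ {±1}`. Then
`Z_τ(γ) / (2 cosh γ)^{N_B} = ∑_S ∏_e e^{γ σ_e} / (2 cosh γ)`, and each factor tends to `1` if
`σ_e = 1` and to `0` otherwise. Hence the normalised partition function tends to the number of
spin configurations `S` whose Mattis configuration `e ↦ S_{i(e)} S_{j(e)}` equals `τ`, so the
limit is the sum over `S` of the weight of the Mattis configuration of `S`. Finally the gauge
transformation `τ ↦ τ · τ_ξ`, `S ↦ ξ S` leaves `Z` invariant, so every Mattis configuration has
the partition function of the pure ferromagnet.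
-/

open Finset

open Filter Topology Real

theorem exp_div_two_cosh_eq (γ : ℝ) : exp γ / (2 * cosh γ) = (1 + exp (-(2 * γ)))⁻¹ := by
  rw [cosh_eq, show -(2 * γ) = -γ - γ by ring, exp_sub]
  field_simp

theorem tendsto_exp_div_two_cosh : Tendsto (fun γ => exp γ / (2 * cosh γ)) atTop (𝓝 1) := by
  have h : Tendsto (fun γ : ℝ => exp (-(2 * γ))) atTop (𝓝 0) :=
    tendsto_exp_neg_atTop_nhds_zero.comp (tendsto_id.const_mul_atTop two_pos)
  simp_rw [exp_div_two_cosh_eq]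
  simpa using ((tendsto_const_nhds (x := (1 : ℝ))).add h).inv₀ (by norm_num)

theorem exp_neg_div_two_cosh (γ : ℝ) : exp (-γ) / (2 * cosh γ) = 1 - exp γ / (2 * cosh γ) := by
  rw [eq_sub_iff_add_eq, ← add_div, cosh_eq]
  field_simp
  ring

theorem tendsto_exp_mul_unit_div_two_cosh (u : ℤˣ) :
    Tendsto (fun γ => exp (γ * ((u : ℤ) : ℝ)) / (2 * cosh γ)) atTop
      (𝓝 (if u = 1 then 1 else 0)) := by
  rcases Int.units_eq_one_or u with rfl | rfl
  · simpa using tendsto_exp_div_two_cosh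
  · have h_neg : ∀ γ : ℝ, exp (γ * (((-1 : ℤˣ) : ℤ) : ℝ)) / (2 * cosh γ)
        = 1 - exp γ / (2 * cosh γ) := fun γ => by
      rw [← exp_neg_div_two_cosh]
      push_cast
      ring_nf
    simp_rw [h_neg]
    simpa using (tendsto_const_nhds (x := (1 : ℝ))).sub tendsto_exp_div_two_cosh

theorem tendsto_exp_mul_sum_div_two_cosh_pow {ι : Type*} [Fintype ι] (σ : ι → ℤˣ) :
    Tendsto (fun γ => exp (γ * ∑ k, ((σ k : ℤ) : ℝ)) / (2 * cosh γ) ^ Fintype.card ι) atTop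
      (𝓝 (if σ = 1 then 1 else 0)) := by
  have h_prod : ∀ γ : ℝ, exp (γ * ∑ k, ((σ k : ℤ) : ℝ)) / (2 * cosh γ) ^ Fintype.card ι
      = ∏ k, exp (γ * ((σ k : ℤ) : ℝ)) / (2 * cosh γ) := fun γ => by
    rw [prod_div_distrib, prod_const, card_univ, ← exp_sum, mul_sum]
  have h_limit : (if σ = 1 then (1 : ℝ) else 0) = ∏ k, if σ k = 1 then 1 else 0 := by
    simp [prod_boole, funext_iff]
  simp_rw [h_prod, h_limit]
  exact tendsto_finsetProd _ fun k _ => tendsto_exp_mul_unit_div_two_cosh (σ k)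

theorem sum_count_fiber_mul {α β : Type*} [Fintype α] [Fintype β] [DecidableEq β]
    (g : α → β) (c : β → ℝ) :
    ∑ b, (∑ a, if g a = b then (1 : ℝ) else 0) * c b = ∑ a, c (g a) := by
  simp_rw [sum_mul, ite_mul, one_mul, zero_mul]
  rw [sum_comm]
  simp

theorem Int.units_fun_inv_eq_self {α : Type*} (f : α → ℤˣ) : f⁻¹ = f :=
  funext fun a => Int.units_inv_eq_self (f a)

section Gauge

variable {V E : Type*} [Fintype V] [DecidableEq V] [Fintype E] (i j : E → V)

def mattis (ξ : V → ℤˣ) : E → ℤˣ := fun e => ξ (i e) * ξ (j e)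

omit [Fintype V] [DecidableEq V] [Fintype E] in
theorem coe_mattis (ξ : V → ℤˣ) (e : E) :
    ((mattis i j ξ e : ℤ) : ℝ) = ((ξ (i e) : ℤ) : ℝ) * ((ξ (j e) : ℤ) : ℝ) := by
  simp [mattis]

omit [Fintype V] [DecidableEq V] in
theorem isingH_eq_sum_mul_mattis (τ : E → ℤˣ) (S : V → ℤˣ) :
    isingH i j τ S = ∑ e, (((τ * mattis i j S) e : ℤ) : ℝ) := by
  simp [isingH, mattis, mul_assoc]

omit [Fintype V] [DecidableEq V] [Fintype E] in
theorem mul_mattis_eq_one_iff (τ : E → ℤˣ) (S : V → ℤˣ) :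
    τ * mattis i j S = 1 ↔ mattis i j S = τ := by
  rw [mul_eq_one_iff_eq_inv, Int.units_fun_inv_eq_self, eq_comm]

theorem isingZ_mul_mattis (β : ℝ) (τ : E → ℤˣ) (ξ : V → ℤˣ) :
    isingZ i j β (τ * mattis i j ξ) = isingZ i j β τ := by
  refine Fintype.sum_equiv (Equiv.mulLeft ξ) _ _ fun S => ?_
  simp only [isingH, mattis, Equiv.coe_mulLeft, Pi.mul_apply, Units.val_mul, Int.cast_mul]
  congr 2
  exact sum_congr rfl fun e _ => by ring

theorem isingZ_mattis (β : ℝ) (ξ : V → ℤˣ) :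
    isingZ i j β (mattis i j ξ)
      = ∑ S : V → ℤˣ, exp (β * ∑ e, ((S (i e) : ℤ) : ℝ) * ((S (j e) : ℤ) : ℝ)) := by
  rw [← one_mul (mattis i j ξ), isingZ_mul_mattis]
  simp [isingZ, isingH]

theorem tendsto_isingZ_div_two_cosh_pow (τ : E → ℤˣ) :
    Tendsto (fun γ => isingZ i j γ τ / (2 * cosh γ) ^ Fintype.card E) atTop
      (𝓝 (∑ S, if mattis i j S = τ then 1 else 0)) := by
  simp_rw [isingZ, sum_div, isingH_eq_sum_mul_mattis, ← mul_mattis_eq_one_iff i j τ]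
  exact tendsto_finsetSum _ fun S _ => tendsto_exp_mul_sum_div_two_cosh_pow _

end Gauge

theorem stmt_15_general {V E : Type*} [Fintype V] [DecidableEq V] [Fintype E] [DecidableEq E]
    (i j : E → V)
    (βp : ℝ) (f : (E → ℤˣ) → ℝ) :
    Filter.Tendsto
      (fun γ : ℝ =>
        (1 / (2 * Real.cosh γ) ^ (Fintype.card E)) *
          ∑ τ : E → ℤˣ,
            isingZ i j γ τ * (Real.exp (βp * ∑ e, ((τ e : ℤ) : ℝ)) / isingZ i j βp τ) *
              f τ)
      Filter.atTop
      (nhds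
        ((∑ ξ : V → ℤˣ,
            Real.exp (βp * ∑ e, ((ξ (i e) : ℤ) : ℝ) * ((ξ (j e) : ℤ) : ℝ)) *
              f (fun e => ξ (i e) * ξ (j e))) /
          (∑ ξ : V → ℤˣ,
            Real.exp (βp * ∑ e, ((ξ (i e) : ℤ) : ℝ) * ((ξ (j e) : ℤ) : ℝ))))) := by
  set weight : (E → ℤˣ) → ℝ := fun τ =>
    exp (βp * ∑ e, ((τ e : ℤ) : ℝ)) / isingZ i j βp τ * f τ
  have h_rewrite : ∀ γ : ℝ,
      (1 / (2 * cosh γ) ^ Fintype.card E) *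
          ∑ τ : E → ℤˣ, isingZ i j γ τ * (exp (βp * ∑ e, ((τ e : ℤ) : ℝ)) / isingZ i j βp τ) * f τ
        = ∑ τ, isingZ i j γ τ / (2 * cosh γ) ^ Fintype.card E * weight τ := fun γ => by
    rw [mul_sum]
    exact sum_congr rfl fun τ _ => by simp only [weight]; ring
  have h_limit : ∑ τ, (∑ S, if mattis i j S = τ then (1 : ℝ) else 0) * weight τ
      = ∑ S, weight (mattis i j S) := sum_count_fiber_mul _ _
  simp_rw [h_rewrite]
  convert tendsto_finsetSum _ fun τ _ => (tendsto_isingZ_div_two_cosh_pow i j τ).mul_const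
    (weight τ) using 2
  rw [h_limit, sum_div]
  refine sum_congr rfl fun S _ => ?_
  simp only [weight, isingZ_mattis, coe_mattis]
  rw [div_mul_eq_mul_div]
  rfl

/-- as γ → ∞ the correlated-disorder average of f converges to the
average of f over Mattis configurations weighted by the pure Ising measure. -/
theorem stmt_15 {V E : Type*} [Fintype V] [DecidableEq V] [Fintype E] [DecidableEq E]
    (i j : E → V) (hij : ∀ e, i e ≠ j e)
    (βp : ℝ) (f : (E → ℤˣ) → ℝ) :
    Filter.Tendsto
      (fun γ : ℝ =>
        (1 / (2 * Real.cosh γ) ^ (Fintype.card E)) *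
          ∑ τ : E → ℤˣ,
            isingZ i j γ τ * (Real.exp (βp * ∑ e, ((τ e : ℤ) : ℝ)) / isingZ i j βp τ) *
              f τ)
      Filter.atTop
      (nhds
        ((∑ ξ : V → ℤˣ,
            Real.exp (βp * ∑ e, ((ξ (i e) : ℤ) : ℝ) * ((ξ (j e) : ℤ) : ℝ)) *
              f (fun e => ξ (i e) * ξ (j e))) /
          (∑ ξ : V → ℤˣ,
            Real.exp (βp * ∑ e, ((ξ (i e) : ℤ) : ℝ) * ((ξ (j e) : ℤ) : ℝ))))) :=
  stmt_15_general i j βp f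
end

section
/- For all real numbers γ, β_p, β and every bounded measurable function g : ℝ → ℝ, the Gaussian-disorder analogue of the magnetization–overlap identity holds: ∫_{ℝ^E} w_J · (Σ_S g((1/N)·Σ_{v∈V} S(v)) · exp(β·H_J(S))) / Z_J(β) dμ(J) = ∫_{ℝ^E} w_J · (Σ_{S¹,S²} g((1/N)·Σ_{v∈V} S¹(v)·S²(v)) · exp(β·H_J(S¹) + β_p·H_J(S²))) / (Z_J(β)·Z_J(β_p)) dμ(J), where w_J = Z_J(γ)·exp(β_p·Σ_{e∈E} J(e)) / Z_J(β_p) and S¹, S² range independently over all spin configurations. -/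
/-!
Nishimori's gauge argument. For a spin configuration `σ`, the gauge map
`J e ↦ σ (i e) * σ (j e) * J e` preserves the centred Gaussian product measure, leaves every
`Z_J` unchanged, turns `H_J(S)` into `H_J(S σ)` and `∑ e, J e` into `H_J(σ)`. So either integral
is unchanged when its integrand is replaced by its average over all gauges `σ`, and after that
averaging both integrands equal `Z_J(γ)` times the two-replica Gibbs average of a function of
the pointwise product `S¹ S²`, whose magnetization is the overlap of `S¹` and `S²`. The spin sums are finite, so all
Gibbs averages are bounded, and the weight `w_J ≤ Z_J(γ)` is integrable.
-/

open Finset MeasureTheory ProbabilityTheory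
open scoped NNReal

/-- Spins are the units `±1` of `ℤ`. -/
noncomputable def isingHJ {V E : Type*} [Fintype E] (i j : E → V)
    (J : E → ℝ) (S : V → ℤˣ) : ℝ :=
  ∑ e, J e * ((S (i e) : ℤ) : ℝ) * ((S (j e) : ℤ) : ℝ)

noncomputable def isingZJ {V E : Type*} [Fintype V] [DecidableEq V] [Fintype E]
    (i j : E → V) (β : ℝ) (J : E → ℝ) : ℝ :=
  ∑ S : V → ℤˣ, Real.exp (β * isingHJ i j J S)

lemma Int.units_pi_mul_self {V : Type*} (σ : V → ℤˣ) : σ * σ = 1 :=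
  funext fun v => Int.units_mul_self (σ v)

lemma measurePreserving_units_mul_gaussianReal (u : ℤˣ) (v : ℝ≥0) :
    MeasurePreserving (fun x : ℝ => ((u : ℤ) : ℝ) * x) (gaussianReal 0 v) (gaussianReal 0 v) := by
  have hu : ((u : ℤ) : ℝ) ^ 2 = 1 := by
    rw [← Int.cast_pow, ← Units.val_pow_eq_pow_val, Int.units_sq, Units.val_one, Int.cast_one]
  refine ⟨measurable_const_mul _, ?_⟩
  rw [gaussianReal_map_const_mul, mul_zero]
  congr
  ext
  simp [hu]

lemma integrable_exp_sum_mul_pi_gaussianReal {E : Type*} [Fintype E] (m : ℝ) (v : ℝ≥0)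
    (c : E → ℝ) :
    Integrable (fun J : E → ℝ => Real.exp (∑ e, c e * J e))
      (Measure.pi fun _ : E => gaussianReal m v) := by
  simp_rw [Real.exp_sum]
  exact Integrable.fintype_prod fun e => integrable_exp_mul_gaussianReal (c e)

lemma integral_eq_of_sum_comp_eq {α ι : Type*} [MeasurableSpace α] {μ : Measure α}
    [Fintype ι] [Nonempty ι] {T : ι → α → α} (hT : ∀ k, MeasurePreserving (T k) μ μ)
    {F G : α → ℝ} (hF : Integrable F μ) (hG : Integrable G μ)
    (h : ∀ x, ∑ k, F (T k x) = ∑ k, G (T k x)) :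
    ∫ x, F x ∂μ = ∫ x, G x ∂μ := by
  have integral_comp {H : α → ℝ} (hH : Integrable H μ) (k : ι) :
      ∫ x, H (T k x) ∂μ = ∫ x, H x ∂μ := by
    have hH' : AEStronglyMeasurable H (μ.map (T k)) := by
      rw [(hT k).map_eq]; exact hH.aestronglyMeasurable
    rw [← integral_map (hT k).aemeasurable hH', (hT k).map_eq]
  have sum_integral_comp {H : α → ℝ} (hH : Integrable H μ) :
      ∫ x, ∑ k, H (T k x) ∂μ = Fintype.card ι * ∫ x, H x ∂μ := by
    rw [integral_finsetSum (f := fun k x => H (T k x)) _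
      fun k _ => (hT k).integrable_comp_of_integrable hH]
    simp [integral_comp hH]
  have hcard : (Fintype.card ι : ℝ) ≠ 0 := Nat.cast_ne_zero.mpr Fintype.card_ne_zero
  refine mul_left_cancel₀ hcard ?_
  rw [← sum_integral_comp hF, ← sum_integral_comp hG]
  exact integral_congr_ae (Filter.Eventually.of_forall h)

section Ising

variable {V E : Type*} [Fintype E] (i j : E → V)

noncomputable def isingGauge (σ : V → ℤˣ) (J : E → ℝ) : E → ℝ :=
  fun e => (((σ (i e) * σ (j e) : ℤˣ) : ℤ) : ℝ) * J e

lemma isingHJ_isingGauge (σ S : V → ℤˣ) (J : E → ℝ) :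
    isingHJ i j (isingGauge i j σ J) S = isingHJ i j J (S * σ) := by
  unfold isingHJ isingGauge
  refine Finset.sum_congr rfl fun e _ => ?_
  push_cast [Pi.mul_apply]
  ring

lemma sum_isingGauge (σ : V → ℤˣ) (J : E → ℝ) :
    ∑ e, isingGauge i j σ J e = isingHJ i j J σ := by
  unfold isingHJ isingGauge
  refine Finset.sum_congr rfl fun e _ => ?_
  push_cast
  ring

lemma measurePreserving_isingGauge (v : ℝ≥0) (σ : V → ℤˣ) :
    MeasurePreserving (isingGauge i j σ) (Measure.pi fun _ : E => gaussianReal 0 v)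
      (Measure.pi fun _ : E => gaussianReal 0 v) :=
  measurePreserving_pi _ _ fun _ => measurePreserving_units_mul_gaussianReal _ v

@[fun_prop]
lemma measurable_isingHJ (S : V → ℤˣ) : Measurable fun J : E → ℝ => isingHJ i j J S := by
  unfold isingHJ
  fun_prop

variable [Fintype V] [DecidableEq V]

noncomputable def gibbsAvg (β : ℝ) (J : E → ℝ) (f : (V → ℤˣ) → ℝ) : ℝ :=
  (∑ S, f S * Real.exp (β * isingHJ i j J S)) / isingZJ i j β J

/-- The weight `w_J` of the statement. -/
noncomputable def nishimoriWeight (γ βp : ℝ) (J : E → ℝ) : ℝ :=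
  isingZJ i j γ J * Real.exp (βp * ∑ e, J e) / isingZJ i j βp J

lemma isingZJ_pos (β : ℝ) (J : E → ℝ) : 0 < isingZJ i j β J :=
  Finset.sum_pos (fun _ _ => Real.exp_pos _) univ_nonempty

lemma isingZJ_isingGauge (β : ℝ) (σ : V → ℤˣ) (J : E → ℝ) :
    isingZJ i j β (isingGauge i j σ J) = isingZJ i j β J := by
  simp only [isingZJ, isingHJ_isingGauge]
  exact Equiv.sum_comp (Equiv.mulRight σ) fun S => Real.exp (β * isingHJ i j J S)

lemma gibbsAvg_isingGauge (β : ℝ) (σ : V → ℤˣ) (J : E → ℝ) (f : (V → ℤˣ) → ℝ) :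
    gibbsAvg i j β (isingGauge i j σ J) f = gibbsAvg i j β J fun S => f (S * σ) := by
  simp only [gibbsAvg, isingZJ_isingGauge, isingHJ_isingGauge]
  congr 1
  have := Equiv.sum_comp (Equiv.mulRight σ) fun S => f (S * σ) * Real.exp (β * isingHJ i j J S)
  simpa [mul_assoc, Int.units_pi_mul_self] using this

lemma nishimoriWeight_isingGauge (γ βp : ℝ) (σ : V → ℤˣ) (J : E → ℝ) :
    nishimoriWeight i j γ βp (isingGauge i j σ J)
      = isingZJ i j γ J * Real.exp (βp * isingHJ i j J σ) / isingZJ i j βp J := by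
  rw [nishimoriWeight, isingZJ_isingGauge, isingZJ_isingGauge, sum_isingGauge]

lemma sum_nishimoriWeight_isingGauge_mul (γ βp : ℝ) (J : E → ℝ) (A : (V → ℤˣ) → ℝ) :
    ∑ σ, nishimoriWeight i j γ βp (isingGauge i j σ J) * A σ
      = isingZJ i j γ J * gibbsAvg i j βp J A := by
  simp only [nishimoriWeight_isingGauge, gibbsAvg, mul_div_assoc', Finset.mul_sum,
    Finset.sum_div]
  exact Finset.sum_congr rfl fun σ _ => by ring

lemma gibbsAvg_const (β : ℝ) (J : E → ℝ) (c : ℝ) : gibbsAvg i j β J (fun _ => c) = c := by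
  rw [gibbsAvg, ← Finset.mul_sum, ← isingZJ, mul_div_cancel_right₀ _ (isingZJ_pos i j β J).ne']

lemma abs_gibbsAvg_le {β : ℝ} {J : E → ℝ} {f : (V → ℤˣ) → ℝ} {C : ℝ} (hf : ∀ S, |f S| ≤ C) :
    |gibbsAvg i j β J f| ≤ C := by
  have hZ := isingZJ_pos i j β J
  rw [gibbsAvg, abs_div, abs_of_pos hZ, div_le_iff₀ hZ, isingZJ, Finset.mul_sum]
  refine (Finset.abs_sum_le_sum_abs _ _).trans (Finset.sum_le_sum fun S _ => ?_)
  rw [abs_mul, abs_of_pos (Real.exp_pos _)]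
  exact mul_le_mul_of_nonneg_right (hf S) (Real.exp_pos _).le

lemma gibbsAvg_gibbsAvg (β βp : ℝ) (J : E → ℝ) (f : (V → ℤˣ) → (V → ℤˣ) → ℝ) :
    gibbsAvg i j βp J (fun S₂ => gibbsAvg i j β J fun S₁ => f S₁ S₂)
      = (∑ S₁, ∑ S₂, f S₁ S₂ * Real.exp (β * isingHJ i j J S₁ + βp * isingHJ i j J S₂)) /
          (isingZJ i j β J * isingZJ i j βp J) := by
  rw [Finset.sum_comm]
  simp only [gibbsAvg, Real.exp_add, Finset.sum_div, Finset.sum_mul]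
  refine Finset.sum_congr rfl fun S₂ _ => Finset.sum_congr rfl fun S₁ _ => ?_
  ring

@[fun_prop]
lemma measurable_isingZJ (β : ℝ) : Measurable fun J : E → ℝ => isingZJ i j β J := by
  unfold isingZJ
  fun_prop

lemma measurable_gibbsAvg (β : ℝ) {f : (E → ℝ) → (V → ℤˣ) → ℝ}
    (hf : ∀ S, Measurable fun J => f J S) : Measurable fun J => gibbsAvg i j β J (f J) := by
  unfold gibbsAvg
  fun_prop

lemma exp_mul_sum_le_isingZJ (β : ℝ) (J : E → ℝ) :
    Real.exp (β * ∑ e, J e) ≤ isingZJ i j β J := by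
  have h : isingHJ i j J 1 = ∑ e, J e := by simp [isingHJ]
  rw [← h]
  exact Finset.single_le_sum (f := fun S => Real.exp (β * isingHJ i j J S))
    (fun _ _ => (Real.exp_pos _).le) (mem_univ 1)

lemma integrable_isingZJ (m : ℝ) (v : ℝ≥0) (β : ℝ) :
    Integrable (isingZJ i j β) (Measure.pi fun _ : E => gaussianReal m v) := by
  have hlin (S : V → ℤˣ) (J : E → ℝ) : β * isingHJ i j J S
      = ∑ e, β * ((S (i e) : ℤ) : ℝ) * ((S (j e) : ℤ) : ℝ) * J e := by
    rw [isingHJ, Finset.mul_sum]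
    exact Finset.sum_congr rfl fun e _ => by ring
  unfold isingZJ
  simp_rw [hlin]
  exact integrable_finsetSum _ fun S _ => integrable_exp_sum_mul_pi_gaussianReal m v _

lemma integrable_nishimoriWeight_mul (m : ℝ) (v : ℝ≥0) (γ βp : ℝ) {A : (E → ℝ) → ℝ} {C : ℝ}
    (hA : Measurable A) (hAC : ∀ J, |A J| ≤ C) :
    Integrable (fun J => nishimoriWeight i j γ βp J * A J)
      (Measure.pi fun _ : E => gaussianReal m v) := by
  have hw_le (J : E → ℝ) : ‖nishimoriWeight i j γ βp J‖ ≤ isingZJ i j γ J := by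
    have hZp := isingZJ_pos i j βp J
    rw [nishimoriWeight, Real.norm_of_nonneg (by positivity [isingZJ_pos i j γ J]),
      div_le_iff₀ hZp]
    exact mul_le_mul_of_nonneg_left (exp_mul_sum_le_isingZJ i j βp J) (isingZJ_pos i j γ J).le
  have hw : Integrable (nishimoriWeight i j γ βp) (Measure.pi fun _ : E => gaussianReal m v) := by
    refine (integrable_isingZJ i j m v γ).mono' ?_ (Filter.Eventually.of_forall hw_le)
    unfold nishimoriWeight
    exact (by fun_prop : Measurable _).aestronglyMeasurable
  exact hw.mul_bdd hA.aestronglyMeasurable (Filter.Eventually.of_forall hAC)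

theorem integral_nishimoriWeight_mul_gibbsAvg (v : ℝ≥0) (γ βp β : ℝ) (f : (V → ℤˣ) → ℝ) :
    ∫ J, nishimoriWeight i j γ βp J * gibbsAvg i j β J f
        ∂(Measure.pi fun _ : E => gaussianReal 0 v)
      = ∫ J, nishimoriWeight i j γ βp J *
          gibbsAvg i j βp J (fun S₂ => gibbsAvg i j β J fun S₁ => f (S₁ * S₂))
        ∂(Measure.pi fun _ : E => gaussianReal 0 v) := by
  have hf (S : V → ℤˣ) : |f S| ≤ ∑ S, |f S| :=
    single_le_sum (f := fun S => |f S|) (fun _ _ => abs_nonneg _) (mem_univ S)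
  refine integral_eq_of_sum_comp_eq (measurePreserving_isingGauge i j v)
    (integrable_nishimoriWeight_mul i j 0 v γ βp (measurable_gibbsAvg i j β fun _ => by fun_prop)
      fun _ => abs_gibbsAvg_le i j hf)
    (integrable_nishimoriWeight_mul i j 0 v γ βp
      (measurable_gibbsAvg i j βp fun _ => measurable_gibbsAvg i j β fun _ => by fun_prop)
      fun _ => abs_gibbsAvg_le i j fun _ => abs_gibbsAvg_le i j fun _ => hf _) fun J => ?_
  -- After gauging, both sides become `Z_J(γ)` times the two-replica average of `f (S₁ * S₂)`.
  have hgauge (σ S₁ S₂ : V → ℤˣ) : S₁ * σ * (S₂ * σ) = S₁ * S₂ := by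
    rw [mul_mul_mul_comm, Int.units_pi_mul_self, mul_one]
  simp only [gibbsAvg_isingGauge, hgauge, sum_nishimoriWeight_isingGauge_mul, gibbsAvg_const]

end Ising

theorem stmt_18_general {V E : Type*} [Fintype V] [DecidableEq V] [Fintype E]
    (i j : E → V)
    (γ βp β : ℝ) (g : ℝ → ℝ) :
    ∫ J : E → ℝ,
        (isingZJ i j γ J * Real.exp (βp * ∑ e, J e) / isingZJ i j βp J) *
          ((∑ S : V → ℤˣ,
              g ((1 / (Fintype.card V : ℝ)) * ∑ v, ((S v : ℤ) : ℝ)) *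
                Real.exp (β * isingHJ i j J S)) / isingZJ i j β J)
        ∂(Measure.pi fun _ : E => gaussianReal 0 1)
      = ∫ J : E → ℝ,
          (isingZJ i j γ J * Real.exp (βp * ∑ e, J e) / isingZJ i j βp J) *
            ((∑ S1 : V → ℤˣ, ∑ S2 : V → ℤˣ,
                g ((1 / (Fintype.card V : ℝ)) * ∑ v, ((S1 v : ℤ) : ℝ) * ((S2 v : ℤ) : ℝ)) *
                  Real.exp (β * isingHJ i j J S1 + βp * isingHJ i j J S2)) /
              (isingZJ i j β J * isingZJ i j βp J))
          ∂(Measure.pi fun _ : E => gaussianReal 0 1) := by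
  have h := integral_nishimoriWeight_mul_gibbsAvg i j 1 γ βp β
    fun S => g ((1 / (Fintype.card V : ℝ)) * ∑ v, ((S v : ℤ) : ℝ))
  simp only [gibbsAvg_gibbsAvg, Pi.mul_apply, Units.val_mul, Int.cast_mul] at h
  exact h

/-- Gaussian-disorder magnetization-overlap identity. -/
theorem stmt_18 {V E : Type*} [Fintype V] [DecidableEq V] [Fintype E] [DecidableEq E]
    (i j : E → V) (hij : ∀ e, i e ≠ j e)
    (γ βp β : ℝ) (g : ℝ → ℝ) (hmeas : Measurable g) (hbdd : ∃ C, ∀ x, |g x| ≤ C) :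
    ∫ J : E → ℝ,
        (isingZJ i j γ J * Real.exp (βp * ∑ e, J e) / isingZJ i j βp J) *
          ((∑ S : V → ℤˣ,
              g ((1 / (Fintype.card V : ℝ)) * ∑ v, ((S v : ℤ) : ℝ)) *
                Real.exp (β * isingHJ i j J S)) / isingZJ i j β J)
        ∂(Measure.pi fun _ : E => gaussianReal 0 1)
      = ∫ J : E → ℝ,
          (isingZJ i j γ J * Real.exp (βp * ∑ e, J e) / isingZJ i j βp J) *
            ((∑ S1 : V → ℤˣ, ∑ S2 : V → ℤˣ,
                g ((1 / (Fintype.card V : ℝ)) * ∑ v, ((S1 v : ℤ) : ℝ) * ((S2 v : ℤ) : ℝ)) *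
                  Real.exp (β * isingHJ i j J S1 + βp * isingHJ i j J S2)) /
              (isingZJ i j β J * isingZJ i j βp J))
          ∂(Measure.pi fun _ : E => gaussianReal 0 1) :=
  stmt_18_general i j γ βp β g
end
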